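/- arXiv:2107.02372 — 2 statements merged into one kernel-verified Lean document; each statement's English description precedes it below -/
import Mathlib

section
/- Let k be a field, n, m ≥ 1 integers, and N = nm + 1. Let Δ : kS_N → kS_N ⊗_k kS_N be the algebra homomorphism determined by Δ(σ) = σ ⊗ σ for σ ∈ S_N. For t ≤ N let a_t ∈ kS_N denote the skew-symmetrizer Σ_{σ∈S_t} sgn(σ)·σ over the subgroup S_t of S_N permuting the first t letters, and let I_t ⊆ kS_N be the two-sided ideal generated by a_t. Then Δ(a_N) lies in I_{n+1} ⊗_k kS_N + kS_N ⊗_k I_{m+1}; equivalently, a_N lies in the kernel of the composite kS_N → kS_N ⊗ kS_N → (kS_N/I_{n+1}) ⊗ (kS_N/I_{m+1}). -/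
open scoped TensorProduct

noncomputable section

variable (k : Type*) [Field k]

/-- The skew-symmetrizer `a_t = Σ_{σ ∈ S_t} sgn(σ)·σ` over the subgroup `S_t < S_N`
permuting the first `t` letters, as an element of the group algebra `k S_N`. -/
def skewSymmetrizerIn (N t : ℕ) (h : t ≤ N) : MonoidAlgebra k (Equiv.Perm (Fin N)) :=
  ∑ σ : Equiv.Perm (Fin t),
    (Equiv.Perm.sign σ : ℤ) •
      MonoidAlgebra.of k (Equiv.Perm (Fin N)) (σ.viaEmbedding (Fin.castLEEmb h))

/-- The two-sided ideal of `A` generated by `x`, as a `k`-submodule of `A`. -/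
def twoSidedSpan {A : Type*} [Ring A] [Algebra k A] (x : A) : Submodule k A :=
  Submodule.span k {y | ∃ g h : A, y = g * x * h}

/-- The algebra homomorphism `Δ : kS_N → kS_N ⊗_k kS_N` determined by `Δ(σ) = σ ⊗ σ`. -/
def comulSym (N : ℕ) :
    MonoidAlgebra k (Equiv.Perm (Fin N)) →ₐ[k]
      (MonoidAlgebra k (Equiv.Perm (Fin N)) ⊗[k] MonoidAlgebra k (Equiv.Perm (Fin N))) :=
  MonoidAlgebra.lift k _ (Equiv.Perm (Fin N))
    { toFun := fun σ => MonoidAlgebra.of k _ σ ⊗ₜ[k] MonoidAlgebra.of k _ σ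
      map_one' := by simp [Algebra.TensorProduct.one_def, MonoidAlgebra.one_def]
      map_mul' := fun a b => by simp [Algebra.TensorProduct.tmul_mul_tmul] }

/-!
For `V = k^d`, the kernel of the action of `kS_N` on `V^{⊗N}` by permuting the tensor factors is
exactly the ideal `I_{d+1}`. The skew-symmetrizer on `d + 1` positions kills every basis word
`e_{J 0} ⊗ ⋯ ⊗ e_{J (N-1)}`, since two of those positions carry the same letter. Conversely,
modulo `I_{d+1}` every permutation straightens to a combination of permutations without an
increasing subsequence of length `d + 1`, and these act linearly independently, as one sees by
testing against a Mirsky colouring of the lexicographically least one.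

So `kS_N/I_{n+1} ⊗ kS_N/I_{m+1}` embeds into `End(V^{⊗N}) ⊗ End(W^{⊗N}) ≅ End((V ⊗ W)^{⊗N})`
for `dim V = n`, `dim W = m`. There `Δ(a_N)` acts as the skew-symmetrizer on `N` positions over
an alphabet of `nm < N` letters, hence as zero.
-/

open Equiv Equiv.Perm MonoidAlgebra

theorem Equiv.Perm.exists_lt_apply_of_ne_one {α : Type*} [LinearOrder α] [WellFoundedLT α]
    {π : Perm α} (hπ : π ≠ 1) : ∃ p, p < π p ∧ ∀ q < p, π q = q := by
  obtain ⟨x, hx⟩ : ∃ x, π x ≠ x := by by_contra! h; exact hπ (Equiv.ext h)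
  obtain ⟨p, hp, hmin⟩ := wellFounded_lt.has_min {p | π p ≠ p} ⟨x, hx⟩
  have hfix : ∀ q < p, π q = q := fun q hq => by_contra fun h => hmin q h hq
  refine ⟨p, (lt_or_gt_of_ne hp).resolve_left fun h => hp ?_, hfix⟩
  exact π.injective (hfix _ h)

theorem Equiv.Perm.toLex_lt_toLex_comp {α β : Type*} [LinearOrder α] [WellFoundedLT α]
    [LinearOrder β] {f : α → β} {π : Perm α} (hπ : π ≠ 1)
    (h : ∀ p, p < π p → f p < f (π p)) : toLex f < toLex (f ∘ π) := by
  obtain ⟨p, hp, hfix⟩ := π.exists_lt_apply_of_ne_one hπ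
  exact ⟨p, fun q hq => by simp [hfix q hq], h p hp⟩

theorem Equiv.Perm.toLex_comp_lt_toLex {α β : Type*} [LinearOrder α] [WellFoundedLT α]
    [LinearOrder β] {f : α → β} {π : Perm α} (hπ : π ≠ 1)
    (h : ∀ p, p < π p → f (π p) < f p) : toLex (f ∘ π) < toLex f := by
  obtain ⟨p, hp, hfix⟩ := π.exists_lt_apply_of_ne_one hπ
  exact ⟨p, fun q hq => by simp [hfix q hq], h p hp⟩

theorem Equiv.Perm.sum_sign_smul_eq_zero {α M : Type*} [DecidableEq α] [Fintype α]
    [AddCommGroup M] (f : Perm α → M) {i j : α} (hij : i ≠ j)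
    (hf : ∀ σ, f (σ * swap i j) = f σ) : ∑ σ, (sign σ : ℤ) • f σ = 0 := by
  refine Finset.sum_ninvolution (· * swap i j) (fun σ => ?_) (fun σ _ h => ?_)
    (fun _ => Finset.mem_univ _) (fun σ => by simp [mul_assoc])
  · rw [hf, sign_mul, sign_swap hij, mul_neg_one, Units.val_neg, neg_smul, add_neg_cancel]
  · exact hij (swap_eq_one_iff.1 (mul_eq_left.1 h))

theorem Equiv.Perm.viaEmbedding_swap {α β : Type*} [DecidableEq α] [DecidableEq β] [Fintype α]
    (e : α ↪ β) (i j : α) : (swap i j).viaEmbedding e = swap (e i) (e j) := by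
  ext x
  by_cases hx : x ∈ Set.range e
  · obtain ⟨a, rfl⟩ := hx
    rw [viaEmbedding_apply, e.injective.swap_apply]
  · have hi : x ≠ e i := fun h => hx ⟨i, h.symm⟩
    have hj : x ≠ e j := fun h => hx ⟨j, h.symm⟩
    rw [viaEmbedding_apply_of_notMem _ _ _ hx, swap_apply_of_ne_of_ne hi hj]

theorem Equiv.Perm.viaEmbedding_trans {α β : Type*} [Fintype α] [DecidableEq β] (ρ : Perm α)
    (e : α ↪ β) (g : Perm β) :
    ρ.viaEmbedding (e.trans g.toEmbedding) = g * ρ.viaEmbedding e * g⁻¹ := by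
  ext x
  by_cases hx : x ∈ Set.range (e.trans g.toEmbedding)
  · obtain ⟨a, rfl⟩ := hx
    rw [viaEmbedding_apply]
    simp [viaEmbedding_apply]
  · have hx' : g⁻¹ x ∉ Set.range e := fun ⟨a, ha⟩ => hx ⟨a, by simp [ha]⟩
    rw [viaEmbedding_apply_of_notMem _ _ _ hx, Perm.coe_mul, Perm.coe_mul, Function.comp_apply,
      Function.comp_apply, viaEmbedding_apply_of_notMem _ _ _ hx', Perm.inv_def, apply_symm_apply]

theorem Function.Embedding.exists_perm_apply_eq {α β : Type*} [Finite β] (e₁ e₂ : α ↪ β) :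
    ∃ g : Perm β, ∀ i, g (e₁ i) = e₂ i := by
  classical
  let e := (Equiv.ofInjective e₁ e₁.injective).symm.trans (Equiv.ofInjective e₂ e₂.injective)
  exact ⟨e.extendSubtype, fun i => by
    simp [e, extendSubtype_apply_of_mem e (e₁ i) (Set.mem_range_self i)]⟩

def HasIncreasingSubseq {α β : Type*} [Preorder α] [Preorder β] (t : ℕ) (f : α → β) : Prop :=
  ∃ s : Fin t → α, StrictMono s ∧ StrictMono (f ∘ s)

theorem exists_colouring_of_not_hasIncreasingSubseq {α β : Type*} [LinearOrder α] [LinearOrder β]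
    {f : α → β} (hf : Function.Injective f) {d : ℕ} (h : ¬ HasIncreasingSubseq (d + 1) f) :
    ∃ J : α → Fin d, ∀ p q, p < q → J p = J q → f q < f p := by
  -- Mirsky: colour `p` by the height of `(p, f p)` in the graph of `f`, a subposet of `α × β`
  let G := {x : α × β // x.2 = f x.1}
  let g : α → G := fun a => ⟨(a, f a), rfl⟩
  have hlt : ∀ {x y : G}, x < y → x.1.1 < y.1.1 ∧ x.1.2 < y.1.2 := by
    intro x y hxy
    have hne : x.1.1 ≠ y.1.1 := fun h => hxy.ne (Subtype.ext (Prod.ext h (by rw [x.2, y.2, h])))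
    rcases Prod.lt_iff.1 hxy with h | h
    · exact ⟨h.1, h.2.lt_of_ne (by rw [x.2, y.2]; exact hf.ne hne)⟩
    · exact ⟨h.1.lt_of_ne hne, h.2⟩
  have hheight : ∀ a, Order.height (g a) < d := by
    intro a
    by_contra! hd
    obtain ⟨p, -, rfl⟩ := Order.exists_series_of_le_height (g a) hd
    exact h ⟨fun i => (p i).1.1, fun i j hij => (hlt (p.strictMono hij)).1,
      fun i j hij => by simpa only [Function.comp_apply, (p _).2] using (hlt (p.strictMono hij)).2⟩
  have hcol : ∀ a, ∃ n : Fin d, Order.height (g a) = n := fun a => by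
    obtain ⟨n, hn⟩ := ENat.ne_top_iff_exists.1 (hheight a).ne_top
    exact ⟨⟨n, by exact_mod_cast hn ▸ hheight a⟩, hn.symm⟩
  choose J hJ using hcol
  refine ⟨J, fun p q hpq hpq' => (le_of_not_gt fun hf' => ?_).lt_of_ne (hf.ne hpq.ne')⟩
  have := Order.height_strictMono (show g p < g q from Prod.lt_iff.2 (Or.inl ⟨hpq, hf'.le⟩))
    (by rw [hJ]; exact ENat.natCast_lt_top _)
  rw [hJ, hJ, hpq'] at this
  exact this.false

theorem TensorProduct.ker_map_eq_range_sup_range {K M₁ M₂ N₁ N₂ : Type*} [Field K]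
    [AddCommGroup M₁] [AddCommGroup M₂] [AddCommGroup N₁] [AddCommGroup N₂]
    [Module K M₁] [Module K M₂] [Module K N₁] [Module K N₂]
    (f : M₁ →ₗ[K] N₁) (g : M₂ →ₗ[K] N₂) :
    LinearMap.ker (map f g) =
      LinearMap.range (map (LinearMap.ker f).subtype LinearMap.id) ⊔
        LinearMap.range (map LinearMap.id (LinearMap.ker g).subtype) := by
  have hf : Function.Exact (LinearMap.ker f).subtype f.rangeRestrict := by
    rw [LinearMap.exact_iff, LinearMap.ker_rangeRestrict, Submodule.range_subtype]
  have hg : Function.Exact (LinearMap.ker g).subtype g.rangeRestrict := by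
    rw [LinearMap.exact_iff, LinearMap.ker_rangeRestrict, Submodule.range_subtype]
  have hfac : map f g = map (LinearMap.range f).subtype (LinearMap.range g).subtype ∘ₗ
      map f.rangeRestrict g.rangeRestrict := by
    rw [← map_comp]; rfl
  have hinj : Function.Injective (map (LinearMap.range f).subtype (LinearMap.range g).subtype) :=
    map_injective_of_flat_flat _ _ (Submodule.injective_subtype _) (Submodule.injective_subtype _)
  rw [hfac, LinearMap.ker_comp_of_ker_eq_bot _ (LinearMap.ker_eq_bot.2 hinj),
    map_ker hf f.surjective_rangeRestrict hg g.surjective_rangeRestrict, sup_comm]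
  rfl

variable {k}

section TwoSidedSpan

variable {A : Type*} [Ring A] [Algebra k A]

theorem self_mem_twoSidedSpan (x : A) : x ∈ twoSidedSpan k x :=
  Submodule.subset_span ⟨1, 1, by simp⟩

theorem mul_mul_mem_twoSidedSpan {x y : A} (a b : A) (h : y ∈ twoSidedSpan k x) :
    a * y * b ∈ twoSidedSpan k x := by
  induction h using Submodule.span_induction with
  | mem y hy =>
    obtain ⟨g, h, rfl⟩ := hy
    exact Submodule.subset_span ⟨a * g, h * b, by noncomm_ring⟩
  | zero => simp
  | add y z _ _ hy hz => simpa [mul_add, add_mul] using add_mem hy hz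
  | smul c y _ hy => simpa using Submodule.smul_mem _ c hy

end TwoSidedSpan

variable (k) in
def skewSymmetrizer {t N : ℕ} (e : Fin t ↪ Fin N) : MonoidAlgebra k (Perm (Fin N)) :=
  ∑ σ : Perm (Fin t), (sign σ : ℤ) • of k _ (σ.viaEmbedding e)

theorem skewSymmetrizer_mem_twoSidedSpan {t N : ℕ} (h : t ≤ N) (e : Fin t ↪ Fin N) :
    skewSymmetrizer k e ∈ twoSidedSpan k (skewSymmetrizerIn k N t h) := by
  obtain ⟨g, hg⟩ := (Fin.castLEEmb h).exists_perm_apply_eq e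
  have he : (Fin.castLEEmb h).trans g.toEmbedding = e := Function.Embedding.ext hg
  have : skewSymmetrizer k e =
      of k _ g * skewSymmetrizerIn k N t h * of k _ g⁻¹ := by
    simp_rw [skewSymmetrizer, skewSymmetrizerIn, Finset.mul_sum, Finset.sum_mul, mul_smul_comm,
      smul_mul_assoc, ← map_mul, ← viaEmbedding_trans, he]
  rw [this]
  exact mul_mul_mem_twoSidedSpan _ _ (self_mem_twoSidedSpan _)

theorem toLex_lt_toLex_mul_viaEmbedding {t N : ℕ} {σ : Perm (Fin N)} {s : Fin t → Fin N}
    (hs : StrictMono s) (hσs : StrictMono (σ ∘ s)) {ρ : Perm (Fin t)} (hρ : ρ ≠ 1) :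
    toLex ⇑σ < toLex ⇑(σ * ρ.viaEmbedding ⟨s, hs.injective⟩) := by
  set e : Fin t ↪ Fin N := ⟨s, hs.injective⟩
  have hρe : ρ.viaEmbedding e ≠ 1 := by
    rw [← viaEmbeddingHom_apply, Ne, ← map_one (viaEmbeddingHom e),
      (viaEmbeddingHom_injective e).eq_iff]
    exact hρ
  refine toLex_lt_toLex_comp hρe fun p hp => ?_
  by_cases hpe : p ∈ Set.range e
  · obtain ⟨a, rfl⟩ := hpe
    rw [viaEmbedding_apply] at hp ⊢
    exact hσs (hs.lt_iff_lt.1 hp)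
  · rw [viaEmbedding_apply_of_notMem _ _ _ hpe] at hp
    exact absurd hp (lt_irrefl p)

/-- Straightening: if `e` is an increasing subsequence of `σ`, then `σ * a_e` lies in the ideal
and its other terms are lexicographically larger than `σ`. -/
theorem of_mem_supported_sup_twoSidedSpan {t N : ℕ} (h : t ≤ N) (σ : Perm (Fin N)) :
    of k _ σ ∈ supported k k {σ : Perm (Fin N) | ¬ HasIncreasingSubseq t ⇑σ} ⊔
      twoSidedSpan k (skewSymmetrizerIn k N t h) := by
  induction σ using (InvImage.wf (fun σ : Perm (Fin N) => toLex ⇑σ) wellFounded_gt).induction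
    with | _ σ ih => ?_
  obtain hσ | ⟨s, hs, hσs⟩ := (em (HasIncreasingSubseq t ⇑σ)).symm
  · refine Submodule.mem_sup_left ?_
    rw [supported_eq_span_single, of_apply]
    exact Submodule.subset_span ⟨σ, hσ, rfl⟩
  set e : Fin t ↪ Fin N := ⟨s, hs.injective⟩
  have hsplit : of k _ σ = of k _ σ * skewSymmetrizer k e -
      ∑ ρ ∈ Finset.univ.erase 1, (sign ρ : ℤ) • of k _ (σ * ρ.viaEmbedding e) := by
    have h1 : (1 : Perm (Fin t)).viaEmbedding e = 1 := map_one (viaEmbeddingHom e)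
    rw [eq_sub_iff_add_eq, skewSymmetrizer, Finset.mul_sum,
      ← Finset.add_sum_erase Finset.univ _ (Finset.mem_univ 1)]
    simp only [mul_smul_comm, ← map_mul, h1, Perm.sign_one, Units.val_one, one_smul, mul_one]
  rw [hsplit]
  refine sub_mem (Submodule.mem_sup_right ?_) (sum_mem fun ρ hρ => zsmul_mem (ih _ ?_) _)
  · simpa using mul_mul_mem_twoSidedSpan (of k _ σ) 1 (skewSymmetrizer_mem_twoSidedSpan h e)
  · exact toLex_lt_toLex_mul_viaEmbedding hs hσs (Finset.ne_of_mem_erase hρ)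

theorem supported_sup_twoSidedSpan_eq_top {t N : ℕ} (h : t ≤ N) :
    supported k k {σ : Perm (Fin N) | ¬ HasIncreasingSubseq t ⇑σ} ⊔
      twoSidedSpan k (skewSymmetrizerIn k N t h) = ⊤ :=
  eq_top_iff.2 fun x _ => x.induction_on (of_mem_supported_sup_twoSidedSpan h)
    (fun _ _ => add_mem) (fun r _ => Submodule.smul_mem _ r)

section TensorPower

attribute [local instance] arrowAction

theorem Equiv.swap_smul_eq_self {α β : Type*} [DecidableEq α] {J : α → β} {i j : α}
    (hJ : J i = J j) : swap i j • J = J := by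
  funext x
  show J ((swap i j)⁻¹ x) = J x
  rw [swap_inv, swap_apply_def]
  split_ifs <;> simp_all

theorem Equiv.Perm.viaEmbedding_mul_swap_smul {t N : ℕ} {β : Type*} (ρ : Perm (Fin t))
    (e : Fin t ↪ Fin N) {J : Fin N → β} {i j : Fin t} (hJ : J (e i) = J (e j)) :
    (ρ * swap i j).viaEmbedding e • J = ρ.viaEmbedding e • J := by
  rw [← viaEmbeddingHom_apply, map_mul, mul_smul, viaEmbeddingHom_apply, viaEmbeddingHom_apply,
    viaEmbedding_swap, swap_smul_eq_self hJ]

variable (k) in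
/-- `k[Fin N → Fin d]` models `(k^d)^{⊗N}`, the word `J` standing for `e_{J 0} ⊗ ⋯ ⊗ e_{J (N-1)}`;
permutations act by permuting the tensor factors. -/
def tensorPowerRep (N d : ℕ) :
    MonoidAlgebra k (Perm (Fin N)) →ₐ[k] Module.End k (MonoidAlgebra k (Fin N → Fin d)) :=
  (Representation.ofMulAction k (Perm (Fin N)) (Fin N → Fin d)).asAlgebraHom

theorem tensorPowerRep_of_single {N d : ℕ} (σ : Perm (Fin N)) (J : Fin N → Fin d) :
    tensorPowerRep k N d (of k _ σ) (single J 1) = single (σ • J) 1 := by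
  rw [tensorPowerRep, Representation.asAlgebraHom_of, Representation.ofMulAction_single]

theorem tensorPowerRep_skewSymmetrizer {t N d : ℕ} (hd : d < t) (e : Fin t ↪ Fin N) :
    tensorPowerRep k N d (skewSymmetrizer k e) = 0 := by
  refine lhom_ext' fun J => LinearMap.ext_ring ?_
  obtain ⟨i, j, hij, hJ⟩ := Fintype.exists_ne_map_eq_of_card_lt (J ∘ e) (by simpa using hd)
  simp only [LinearMap.comp_apply, lsingle_apply, LinearMap.zero_apply, skewSymmetrizer,
    map_sum, map_zsmul, LinearMap.sum_apply, LinearMap.smul_apply, tensorPowerRep_of_single]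
  exact sum_sign_smul_eq_zero _ hij fun ρ => by rw [viaEmbedding_mul_swap_smul ρ e hJ]

theorem twoSidedSpan_le_ker_tensorPowerRep {N d : ℕ} (h : d + 1 ≤ N) :
    twoSidedSpan k (skewSymmetrizerIn k N (d + 1) h) ≤
      LinearMap.ker (tensorPowerRep k N d).toLinearMap := by
  rw [twoSidedSpan, Submodule.span_le]
  rintro _ ⟨g, g', rfl⟩
  have : tensorPowerRep k N d (skewSymmetrizerIn k N (d + 1) h) = 0 :=
    tensorPowerRep_skewSymmetrizer d.lt_succ_self _
  simp [this]

theorem toLex_lt_toLex_of_smul_eq_smul {N d : ℕ} {σ₀ σ : Perm (Fin N)} {J : Fin N → Fin d}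
    (hJ : ∀ p q, p < q → J p = J q → σ₀ q < σ₀ p) (h : σ • J = σ₀ • J) (hne : σ ≠ σ₀) :
    toLex ⇑σ < toLex ⇑σ₀ := by
  set π := σ₀⁻¹ * σ
  have hπ : π • J = J := by rw [mul_smul, h, inv_smul_smul]
  have hσ : σ = σ₀ * π := by simp [π]
  rw [hσ, coe_mul]
  refine toLex_comp_lt_toLex (fun h1 => hne (by simp [hσ, h1])) fun p hp => hJ p (π p) hp ?_
  rw [← congrFun hπ (π p)]
  show J p = J (π⁻¹ (π p))
  simp

/-- Test `c` on the Mirsky colouring `J` of the lexicographically least `σ₀` in its support: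
only `σ₀` sends the word `J` to `σ₀ • J`. -/
theorem disjoint_supported_ker_tensorPowerRep (N d : ℕ) :
    Disjoint (supported k k {σ : Perm (Fin N) | ¬ HasIncreasingSubseq (d + 1) ⇑σ})
      (LinearMap.ker (tensorPowerRep k N d).toLinearMap) := by
  refine Submodule.disjoint_def.2 fun c hc hker => ?_
  by_contra hc0
  obtain ⟨σ₀, hσ₀, hmin⟩ := c.coeff.support.exists_min_image (fun σ => toLex ⇑σ)
    (Finsupp.support_nonempty_iff.2 fun h => hc0 (MonoidAlgebra.ext h))
  obtain ⟨J, hJ⟩ := exists_colouring_of_not_hasIncreasingSubseq σ₀.injective (hc hσ₀)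
  have hexp : c = ∑ σ ∈ c.coeff.support, c.coeff σ • of k _ σ := by
    conv_lhs => rw [← sum_coeff_single c]
    simp [Finsupp.sum, of_apply]
  have hval : (tensorPowerRep k N d c (single J 1)).coeff (σ₀ • J) = c.coeff σ₀ := by
    nth_rewrite 1 [hexp]
    simp only [map_sum, map_smul, LinearMap.sum_apply, LinearMap.smul_apply,
      tensorPowerRep_of_single, coeff_sum, coeff_smul, coeff_single, Finsupp.finsetSum_apply]
    rw [Finset.sum_eq_single_of_mem σ₀ hσ₀ fun σ hσ hne => ?_]
    · simp
    · have hne' : σ • J ≠ σ₀ • J := fun h =>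
        (hmin σ hσ).not_gt (toLex_lt_toLex_of_smul_eq_smul hJ h hne)
      simp [hne']
  rw [show tensorPowerRep k N d c = 0 from hker] at hval
  exact Finsupp.mem_support_iff.1 hσ₀ (by simpa using hval.symm)

theorem ker_tensorPowerRep {N d : ℕ} (h : d + 1 ≤ N) :
    LinearMap.ker (tensorPowerRep k N d).toLinearMap =
      twoSidedSpan k (skewSymmetrizerIn k N (d + 1) h) := by
  set I := twoSidedSpan k (skewSymmetrizerIn k N (d + 1) h)
  set S := supported k k {σ : Perm (Fin N) | ¬ HasIncreasingSubseq (d + 1) ⇑σ}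
  calc LinearMap.ker (tensorPowerRep k N d).toLinearMap
      = (I ⊔ S) ⊓ LinearMap.ker (tensorPowerRep k N d).toLinearMap := by
        rw [sup_comm, supported_sup_twoSidedSpan_eq_top, top_inf_eq]
    _ = I ⊔ S ⊓ LinearMap.ker (tensorPowerRep k N d).toLinearMap :=
        sup_inf_assoc_of_le _ (twoSidedSpan_le_ker_tensorPowerRep h)
    _ = I := by rw [(disjoint_supported_ker_tensorPowerRep N d).eq_bot, sup_bot_eq]

theorem map_tensorPowerRep_comulSym_skewSymmetrizer {t N n m : ℕ} (h : n * m < t)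
    (e : Fin t ↪ Fin N) :
    TensorProduct.map (tensorPowerRep k N n).toLinearMap (tensorPowerRep k N m).toLinearMap
      (comulSym k N (skewSymmetrizer k e)) = 0 := by
  apply (homTensorHomEquiv k _ _ _ _).injective
  rw [map_zero]
  refine ((basis _ k).tensorProduct (basis _ k)).ext fun ⟨J₁, J₂⟩ => ?_
  obtain ⟨i, j, hij, hJ⟩ := Fintype.exists_ne_map_eq_of_card_lt
    (fun a => (J₁ (e a), J₂ (e a))) (by simpa using h)
  simp only [skewSymmetrizer, map_sum, map_zsmul, comulSym, lift_of, MonoidHom.coe_mk,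
    OneHom.coe_mk, TensorProduct.map_tmul, AlgHom.toLinearMap_apply, homTensorHomEquiv_apply,
    TensorProduct.homTensorHomMap_apply, LinearMap.sum_apply, LinearMap.smul_apply,
    LinearMap.zero_apply, Module.Basis.tensorProduct_apply, basis_apply, tensorPowerRep_of_single]
  exact sum_sign_smul_eq_zero _ hij fun ρ => by
    rw [viaEmbedding_mul_swap_smul ρ e (congrArg Prod.fst hJ),
      viaEmbedding_mul_swap_smul ρ e (congrArg Prod.snd hJ)]

end TensorPower

/-- `Δ(a_N)` lies in `I_{n+1} ⊗ kS_N + kS_N ⊗ I_{m+1}`, where `N = nm+1` and `I_t` is the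
two-sided ideal of `kS_N` generated by the skew-symmetrizer `a_t` over `S_t < S_N`. -/
theorem stmt_11 (n m : ℕ) (hn : 1 ≤ n) (hm : 1 ≤ m) :
    comulSym k (n * m + 1) (skewSymmetrizerIn k (n * m + 1) (n * m + 1) le_rfl) ∈
      LinearMap.range (TensorProduct.map
          (twoSidedSpan k (skewSymmetrizerIn k (n * m + 1) (n + 1) (by nlinarith))).subtype
          (LinearMap.id (R := k) (M := MonoidAlgebra k (Equiv.Perm (Fin (n * m + 1)))))) ⊔
      LinearMap.range (TensorProduct.map
          (LinearMap.id (R := k) (M := MonoidAlgebra k (Equiv.Perm (Fin (n * m + 1)))))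
          (twoSidedSpan k (skewSymmetrizerIn k (n * m + 1) (m + 1) (by nlinarith))).subtype) := by
  have hn' : n + 1 ≤ n * m + 1 := by nlinarith
  have hm' : m + 1 ≤ n * m + 1 := by nlinarith
  rw [← ker_tensorPowerRep hn', ← ker_tensorPowerRep hm',
    ← TensorProduct.ker_map_eq_range_sup_range, LinearMap.mem_ker]
  exact map_tensorPowerRep_comulSym_skewSymmetrizer (Nat.lt_succ_self _) _
end
end

section
/- Let p ≥ 2 be a prime and for a ∈ ℕ let ℓ_p(a) denote the minimal natural number e with a < p^e. Then for every partition λ = (λ₁ ≥ λ₂ ≥ ⋯ ≥ λ_l > 0) there exists a partition μ = (μ₁ ≥ μ₂ ≥ ⋯ ≥ μ_l) of the same length with λ_i ≤ μ_i for all 1 ≤ i ≤ l, such that μ satisfies James' condition: p^{ℓ_p(μ_{i+1})} divides μ_i + 1 for each 1 ≤ i ≤ l − 1. -/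
/-- `ℓ_p(a)`: the minimal natural number `e` with `a < p^e`. -/
noncomputable def ellp (p a : ℕ) : ℕ := sInf {e : ℕ | a < p ^ e}

lemma ellp_lt (p a : ℕ) (hp : 2 ≤ p) : a < p ^ ellp p a := by
  have hne : {e : ℕ | a < p ^ e}.Nonempty := ⟨a + 1, by
    have := Nat.lt_pow_self (by omega : 1 < p) (n := a + 1)
    simp only [Set.mem_setOf_eq]
    omega⟩
  exact Nat.sInf_mem hne

/-- Auxiliary sequence: bottom-up construction of the dominating partition. -/
noncomputable def Fseq (p : ℕ) (g : ℕ → ℕ) : ℕ → ℕ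
  | 0 => g 0
  | j + 1 => p ^ ellp p (Fseq p g j) * (g (j + 1) + 1) - 1

lemma Fseq_ge (p : ℕ) (hp : 2 ≤ p) (g : ℕ → ℕ) (j : ℕ) : g j ≤ Fseq p g j := by
  cases j with
  | zero => simp [Fseq]
  | succ j =>
    have hq : 1 ≤ p ^ ellp p (Fseq p g j) := Nat.one_le_pow _ _ (by omega)
    have := Nat.mul_le_mul hq (le_refl (g (j + 1) + 1))
    simp only [Fseq]
    omega

lemma Fseq_succ_eq (p : ℕ) (hp : 2 ≤ p) (g : ℕ → ℕ) (j : ℕ) :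
    Fseq p g (j + 1) + 1 = p ^ ellp p (Fseq p g j) * (g (j + 1) + 1) := by
  have hq : 1 ≤ p ^ ellp p (Fseq p g j) := Nat.one_le_pow _ _ (by omega)
  have h1 : 1 ≤ p ^ ellp p (Fseq p g j) * (g (j + 1) + 1) := Nat.one_le_iff_ne_zero.mpr
    (by positivity)
  simp only [Fseq]
  omega

lemma Fseq_dvd (p : ℕ) (hp : 2 ≤ p) (g : ℕ → ℕ) (j : ℕ) :
    p ^ ellp p (Fseq p g j) ∣ Fseq p g (j + 1) + 1 := by
  rw [Fseq_succ_eq p hp g j]; exact Dvd.intro _ rfl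

lemma Fseq_mono (p : ℕ) (hp : 2 ≤ p) (g : ℕ → ℕ) : Monotone (Fseq p g) := by
  apply monotone_nat_of_le_succ
  intro j
  have hlt : Fseq p g j < p ^ ellp p (Fseq p g j) := ellp_lt p _ hp
  have h := Fseq_succ_eq p hp g j
  nlinarith

/-- Every partition `λ₁ ≥ ⋯ ≥ λ_l > 0` is contained (entrywise, same length) in a
partition `μ` satisfying James' condition: `p^{ℓ_p(μ_{i+1})}` divides `μ_i + 1` for each
`1 ≤ i ≤ l − 1`. -/
theorem stmt_17 (p : ℕ) (hp : p.Prime) (l : ℕ) (lam : Fin l → ℕ)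
    (hanti : Antitone lam) (hpos : ∀ i, 0 < lam i) :
    ∃ mu : Fin l → ℕ, Antitone mu ∧ (∀ i, 0 < mu i) ∧ (∀ i, lam i ≤ mu i) ∧
      ∀ i : Fin l, (h : (i : ℕ) + 1 < l) →
        p ^ ellp p (mu ⟨(i : ℕ) + 1, h⟩) ∣ (mu i + 1) := by
  have hp2 : 2 ≤ p := hp.two_le
  rcases Nat.eq_zero_or_pos l with rfl | hl
  · exact ⟨lam, hanti, hpos, fun i => le_refl _, fun i => i.elim0⟩
  set g : ℕ → ℕ := fun j => if h : j < l then lam ⟨l - 1 - j, by omega⟩ else 1 with hg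
  refine ⟨fun i => Fseq p g (l - 1 - i), ?_, ?_, ?_, ?_⟩
  · intro i j hij
    exact Fseq_mono p hp2 g (by omega)
  · intro i
    show 0 < Fseq p g (l - 1 - (i : ℕ))
    have h1 : g (l - 1 - (i : ℕ)) ≤ Fseq p g (l - 1 - i) := Fseq_ge p hp2 g _
    have h2 : 1 ≤ g (l - 1 - (i : ℕ)) := by
      simp only [hg]
      split
      · exact hpos _
      · exact le_refl 1
    omega
  · intro i
    show lam i ≤ Fseq p g (l - 1 - (i : ℕ))
    have h1 : g (l - 1 - (i : ℕ)) ≤ Fseq p g (l - 1 - i) := Fseq_ge p hp2 g _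
    have h2 : g (l - 1 - (i : ℕ)) = lam i := by
      have hi : (i : ℕ) < l := i.isLt
      have hlt : l - 1 - (i : ℕ) < l := by omega
      simp only [hg, dif_pos hlt]
      congr 1
      ext
      simp
      omega
    omega
  · intro i h
    show p ^ ellp p (Fseq p g (l - 1 - ((i : ℕ) + 1))) ∣ Fseq p g (l - 1 - (i : ℕ)) + 1
    have he : l - 1 - (i : ℕ) = (l - 1 - ((i : ℕ) + 1)) + 1 := by omega
    rw [he]
    exact Fseq_dvd p hp2 g _
end
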